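/- arXiv:2412.12342 — 6 statements merged into one kernel-verified Lean document; each statement's English description precedes it below -/
import Mathlib

section
/- Let k ≥ 1 and let Z be a k×k complex matrix such that Zᴴ·Z − I is positive semidefinite. Then Z·Zᴴ − I is positive semidefinite; consequently, for every density matrix ρ ∈ M_k(ℂ) one has Re tr(ρ·Z·Zᴴ) ≥ 1. -/
/-!
`Zᴴ Z ≥ 1` makes `Zᴴ Z` invertible, so `Z` has a left inverse and hence, matrix rings being
Dedekind-finite, is invertible. Then `Z Zᴴ - 1 = Z (1 - (Zᴴ Z)⁻¹) Zᴴ`, which is positive because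
inversion reverses the order on positive invertible elements. (The unilateral shift `S`, with
`S⋆S = 1` but `SS⋆ ≠ 1`, shows that Dedekind-finiteness cannot be dropped.) Pairing the positive
matrix `Z Zᴴ - 1` with a density matrix `ρ` gives `tr (ρ Z Zᴴ) ≥ tr ρ = 1`.
-/

open Matrix ComplexOrder

theorem CStarAlgebra.one_le_mul_star_of_one_le_star_mul {A : Type*} [CStarAlgebra A]
    [PartialOrder A] [StarOrderedRing A] [IsDedekindFiniteMonoid A] {a : A}
    (h : 1 ≤ star a * a) : 1 ≤ a * star a := by
  obtain ⟨u, rfl⟩ := isUnit_of_mul_isUnit_right (CStarAlgebra.isUnit_of_le 1 h)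
  have hinv : ↑(star u * u)⁻¹ ≤ (1 : A) := CStarAlgebra.inv_le_one (a := star u * u) h
  calc (1 : A) = u * ↑(star u * u)⁻¹ * star (u : A) := by
        simp [_root_.mul_inv_rev, ← star_mul]
    _ ≤ u * 1 * star (u : A) := star_right_conjugate_le_conjugate hinv _
    _ = u * star (u : A) := by rw [mul_one]

namespace Matrix

open scoped Matrix.Norms.L2Operator MatrixOrder

variable {n 𝕜 : Type*} [Fintype n] [RCLike 𝕜]

theorem PosSemidef.trace_mul_nonneg {ρ P : Matrix n n 𝕜} (hρ : ρ.PosSemidef)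
    (hP : P.PosSemidef) : 0 ≤ (ρ * P).trace := by
  classical
  obtain ⟨B, rfl⟩ := CStarAlgebra.nonneg_iff_eq_star_mul_self.mp hρ.nonneg
  rw [Matrix.mul_assoc, trace_mul_comm, Matrix.mul_assoc, ← Matrix.mul_assoc]
  exact (hP.mul_mul_conjTranspose_same B).trace_nonneg

theorem PosSemidef.one_le_trace_mul [DecidableEq n] {ρ M : Matrix n n 𝕜} (hρ : ρ.PosSemidef)
    (hρ_trace : ρ.trace = 1) (hM : (M - 1).PosSemidef) : 1 ≤ (ρ * M).trace := by
  have h := hρ.trace_mul_nonneg hM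
  rwa [Matrix.mul_sub, Matrix.mul_one, trace_sub, hρ_trace, sub_nonneg] at h

theorem mul_conjTranspose_sub_one_posSemidef [DecidableEq n] {Z : Matrix n n ℂ}
    (hZ : (Zᴴ * Z - 1).PosSemidef) : (Z * Zᴴ - 1).PosSemidef :=
  CStarAlgebra.one_le_mul_star_of_one_le_star_mul (a := Z) hZ

end Matrix

theorem zmul_psd_of_mulz_psd_general (k : ℕ) (Z : Matrix (Fin k) (Fin k) ℂ)
    (hZ : (Zᴴ * Z - 1).PosSemidef) :
    (Z * Zᴴ - 1).PosSemidef ∧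
      ∀ ρ : Matrix (Fin k) (Fin k) ℂ, ρ.PosSemidef → ρ.trace = 1 →
        1 ≤ ((ρ * (Z * Zᴴ)).trace).re := by
  have hZZ := mul_conjTranspose_sub_one_posSemidef hZ
  refine ⟨hZZ, fun ρ hρ hρ_trace => ?_⟩
  simpa using (Complex.le_def.mp (hρ.one_le_trace_mul hρ_trace hZZ)).1

/-- If `Z` is a `k × k` complex matrix with `Zᴴ * Z - 1 ⪰ 0`, then
`Z * Zᴴ - 1 ⪰ 0`; consequently for every density matrix `ρ` one has
`Re tr(ρ * Z * Zᴴ) ≥ 1`. -/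
theorem zmul_psd_of_mulz_psd (k : ℕ) (hk : 1 ≤ k) (Z : Matrix (Fin k) (Fin k) ℂ)
    (hZ : (Zᴴ * Z - 1).PosSemidef) :
    (Z * Zᴴ - 1).PosSemidef ∧
      ∀ ρ : Matrix (Fin k) (Fin k) ℂ, ρ.PosSemidef → ρ.trace = 1 →
        1 ≤ ((ρ * (Z * Zᴴ)).trace).re :=
  zmul_psd_of_mulz_psd_general k Z hZ
end

section
/- For every k ≥ 1 and all k×k complex matrices X, Y with Xᴴ = X, X·X = X, Yᴴ = Y, Y·Y = Y, one has Re( tr(XYXY)/k ) − Re( tr(XY)/k ) · Re( tr(Y)/k ) ≥ −1/27. -/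
/-!
Put `B = YXY`, a Hermitian matrix with `tr B = tr(XY)` and `tr B² = tr(XYXY)`, and `t = tr Y / k`.
In terms of the eigenvalues `λᵢ` of `B` the quantity to bound is `(1/k) ∑ (λᵢ² - t λᵢ)`.
An eigenvalue with `λ = λ²` contributes `(1 - t) λ ≥ 0`, any other one at least `-t²/4`.
Since `B - B² = YX(1 - Y)XY`, there are at most `rank (1 - Y) = k (1 - t)` eigenvalues of the
second kind, so the quantity is at least `-t² (1 - t) / 4 ≥ -1/27`.
-/

open Matrix Finset

namespace Matrix.IsHermitian

variable {n 𝕜 : Type*} [Fintype n] [DecidableEq n] [RCLike 𝕜] {A : Matrix n n 𝕜}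

lemma trace_cfc (hA : A.IsHermitian) (f : ℝ → ℝ) :
    (cfc f A).trace = ∑ i, (f (hA.eigenvalues i) : 𝕜) := by
  rw [hA.cfc_eq, IsHermitian.cfc, Unitary.conjStarAlgAut_apply, trace_mul_cycle,
    Unitary.coe_star_mul_self, one_mul, trace_diagonal]
  rfl

lemma rank_cfc (hA : A.IsHermitian) (f : ℝ → ℝ) :
    (cfc f A).rank = Fintype.card {i // f (hA.eigenvalues i) ≠ 0} := by
  rw [hA.cfc_eq, IsHermitian.cfc, Unitary.conjStarAlgAut_apply, ← Unitary.coe_star]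
  simp [-isUnit_iff_ne_zero, -Unitary.coe_star, rank_diagonal]

lemma eigenvalues_mem_of_isIdempotentElem (hA : A.IsHermitian) (hA₂ : IsIdempotentElem A)
    (i : n) : hA.eigenvalues i ∈ ({0, 1} : Set ℝ) :=
  hA₂.spectrum_subset ℝ (hA.spectrum_real_eq_range_eigenvalues ▸ ⟨i, rfl⟩)

lemma trace_eq_rank_of_isIdempotentElem (hA : A.IsHermitian) (hA₂ : IsIdempotentElem A) :
    A.trace = A.rank := by
  rw [hA.trace_eq_sum_eigenvalues, hA.rank_eq_card_non_zero_eigs, Fintype.card_subtype,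
    card_filter, Nat.cast_sum]
  refine sum_congr rfl fun i _ => ?_
  obtain h | h : hA.eigenvalues i = 0 ∨ hA.eigenvalues i = 1 :=
    hA.eigenvalues_mem_of_isIdempotentElem hA₂ i
  all_goals simp [h]

end Matrix.IsHermitian

lemma neg_mul_card_le_sum_sq_sub_mul {ι : Type*} [Fintype ι] (x : ι → ℝ) {t : ℝ}
    (ht : t ≤ 1) :
    -(t ^ 2 / 4) * Fintype.card {i // x i - x i ^ 2 ≠ 0} ≤ ∑ i, (x i ^ 2 - t * x i) := by
  rw [Fintype.card_subtype, card_filter, Nat.cast_sum, mul_sum]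
  refine sum_le_sum fun i _ => ?_
  split_ifs with h
  · nlinarith [sq_nonneg (x i - t / 2)]
  · rw [not_not, sub_eq_zero] at h
    nlinarith [mul_nonneg (sub_nonneg.2 ht) (sq_nonneg (x i))]

lemma sq_mul_one_sub_le {t : ℝ} (ht : 0 ≤ t) : t ^ 2 * (1 - t) ≤ 4 / 27 := by
  nlinarith [mul_nonneg (sq_nonneg (3 * t - 2)) (by linarith : (0 : ℝ) ≤ 3 * t + 1)]

section Projections

variable {n 𝕜 : Type*} [Fintype n] [DecidableEq n] [RCLike 𝕜] {P Q : Matrix n n 𝕜}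

lemma Matrix.neg_mul_le_re_trace_mul_mul_mul_sub (hP : P.IsHermitian) (hP₂ : IsIdempotentElem P)
    (hQ : Q.IsHermitian) (hQ₂ : IsIdempotentElem Q) {t : ℝ} (ht : t ≤ 1) :
    -(t ^ 2 / 4) * (Fintype.card n - RCLike.re Q.trace) ≤
      RCLike.re (P * Q * P * Q).trace - t * RCLike.re (P * Q).trace := by
  set B := Q * P * Q
  have hB : B.IsHermitian := hP.isSelfAdjoint.conjugate_self hQ.isSelfAdjoint
  have hQQ : Q * Q = Q := hQ₂
  have htr₁ : (P * Q).trace = (cfc (id : ℝ → ℝ) B).trace := by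
    rw [cfc_id ℝ B hB.isSelfAdjoint, trace_mul_comm (Q * P), ← mul_assoc, hQQ, trace_mul_comm]
  have htr₂ : (P * Q * P * Q).trace = (cfc (· ^ 2 : ℝ → ℝ) B).trace := by
    have hBB : B * B = Q * (P * Q * P * Q) := by
      simp only [B, mul_assoc, ← mul_assoc Q Q, hQQ]
    rw [cfc_pow_id B 2 hB.isSelfAdjoint, sq, hBB, trace_mul_comm Q, mul_assoc (P * Q * P), hQQ]
  have hrank : (cfc (fun x : ℝ => x - x ^ 2) B).rank ≤ (1 - Q).rank := by
    have : cfc (fun x : ℝ => x - x ^ 2) B = Q * P * (1 - Q) * P * Q := by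
      rw [cfc_sub (fun x : ℝ => x) (· ^ 2 : ℝ → ℝ) B, cfc_id' ℝ B hB.isSelfAdjoint,
        cfc_pow_id B 2 hB.isSelfAdjoint]
      have hPP : P * P = P := hP₂
      simp only [B, sq, mul_sub, sub_mul, mul_one, mul_assoc, ← mul_assoc Q Q, hPP, hQQ]
    rw [this]
    exact (rank_mul_le_left _ _).trans <| (rank_mul_le_left _ _).trans (rank_mul_le_right _ _)
  have hcompl : (Fintype.card n : ℝ) - RCLike.re Q.trace = (1 - Q).rank := by
    have h := (isHermitian_one.sub hQ).trace_eq_rank_of_isIdempotentElem hQ₂.one_sub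
    rw [trace_sub, trace_one] at h
    simpa using congrArg RCLike.re h
  rw [htr₁, htr₂, hB.trace_cfc, hB.trace_cfc, hcompl]
  rw [hB.rank_cfc] at hrank
  calc -(t ^ 2 / 4) * ((1 - Q).rank : ℝ)
      ≤ -(t ^ 2 / 4) * Fintype.card {i // hB.eigenvalues i - hB.eigenvalues i ^ 2 ≠ 0} :=
        mul_le_mul_of_nonpos_left (by exact_mod_cast hrank) (by nlinarith [sq_nonneg t])
    _ ≤ ∑ i, (hB.eigenvalues i ^ 2 - t * hB.eigenvalues i) :=
        neg_mul_card_le_sum_sq_sub_mul hB.eigenvalues ht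
    _ = _ := by simp [sum_sub_distrib, mul_sum]

end Projections

theorem trace_regime_lower_bound_general (k : ℕ)
    (X Y : Matrix (Fin k) (Fin k) ℂ)
    (hX : Xᴴ = X) (hX2 : X * X = X) (hY : Yᴴ = Y) (hY2 : Y * Y = Y) :
    -1 / 27 ≤ ((X * Y * X * Y).trace / (k : ℂ)).re -
      ((X * Y).trace / (k : ℂ)).re * (Y.trace / (k : ℂ)).re := by
  obtain rfl | hk := k.eq_zero_or_pos
  · norm_num
  have hYrank : Y.trace = Y.rank := IsHermitian.trace_eq_rank_of_isIdempotentElem hY hY2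
  set t : ℝ := Y.rank / k
  have ht₀ : 0 ≤ t := by positivity
  have hrank : Y.rank ≤ k := by simpa using Y.rank_le_card_width
  have ht₁ : t ≤ 1 := div_le_one_of_le₀ (by exact_mod_cast hrank) (Nat.cast_nonneg k)
  have key := neg_mul_le_re_trace_mul_mul_mul_sub hX hX2 hY hY2 ht₁
  simp only [RCLike.re_to_complex, Fintype.card_fin, hYrank, Complex.natCast_re] at key
  simp only [Complex.div_natCast_re, hYrank, Complex.natCast_re]
  calc -1 / 27 ≤ -(t ^ 2 / 4) * (1 - t) := by nlinarith [sq_mul_one_sub_le ht₀]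
    _ = -(t ^ 2 / 4) * (k - Y.rank) / k := by
      rw [mul_div_assoc, sub_div, div_self (Nat.cast_pos.2 hk).ne']
    _ ≤ ((X * Y * X * Y).trace.re - t * (X * Y).trace.re) / k := by gcongr
    _ = _ := by ring

/-- For all `k ≥ 1` and all `k × k` complex projections `X, Y`,
`Re(tr(XYXY)/k) − Re(tr(XY)/k)·Re(tr(Y)/k) ≥ −1/27`. -/
theorem trace_regime_lower_bound (k : ℕ) (hk : 1 ≤ k)
    (X Y : Matrix (Fin k) (Fin k) ℂ)
    (hX : Xᴴ = X) (hX2 : X * X = X) (hY : Yᴴ = Y) (hY2 : Y * Y = Y) :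
    -1 / 27 ≤ ((X * Y * X * Y).trace / (k : ℂ)).re -
      ((X * Y).trace / (k : ℂ)).re * (Y.trace / (k : ℂ)).re :=
  trace_regime_lower_bound_general k X Y hX hX2 hY hY2
end

section
/- Let N ≥ 1, K ≥ 1 be natural numbers and let ρ be an N×N positive semidefinite complex matrix such that tr(ρ^ℓ) = K^{1−ℓ} for every natural number ℓ ≥ 1. Then the matrix Π := K·ρ satisfies Π² = Π and Πᴴ = Π (Π is a Hermitian projection) and has rank K. -/
open Matrix ComplexOrder

lemma rank_smul_matrix {N : ℕ} (c : ℂ) (hc : c ≠ 0) (A : Matrix (Fin N) (Fin N) ℂ) :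
    (c • A).rank = A.rank := by
  have h : (c • A).mulVecLin = c • A.mulVecLin := by
    ext v i; simp [Matrix.mulVecLin_apply, Matrix.smul_mulVec]
  unfold Matrix.rank
  rw [h, LinearMap.range_smul _ _ hc]

/-- If `ρ` is an `N × N` positive semidefinite complex matrix with
`tr(ρ^ℓ) = K^{1−ℓ}` for every `ℓ ≥ 1`, then `Π := K·ρ` is a Hermitian projection of
rank `K`. -/
theorem state_with_power_traces_is_projection (N K : ℕ) (hN : 1 ≤ N) (hK : 1 ≤ K)
    (ρ : Matrix (Fin N) (Fin N) ℂ) (hρ : ρ.PosSemidef)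
    (htr : ∀ ℓ : ℕ, 1 ≤ ℓ → (ρ ^ ℓ).trace = (K : ℂ) ^ ((1 : ℤ) - ℓ)) :
    ((K : ℂ) • ρ) * ((K : ℂ) • ρ) = (K : ℂ) • ρ ∧
    ((K : ℂ) • ρ)ᴴ = (K : ℂ) • ρ ∧
    ((K : ℂ) • ρ).rank = K := by
  have hH : ρ.IsHermitian := hρ.1
  set U : Matrix (Fin N) (Fin N) ℂ := (hH.eigenvectorUnitary : Matrix (Fin N) (Fin N) ℂ) with hU
  set lam : Fin N → ℝ := hH.eigenvalues with hlam
  set D : Matrix (Fin N) (Fin N) ℂ := Matrix.diagonal (RCLike.ofReal ∘ lam) with hD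
  have hUU : star U * U = 1 := by simp [hU]
  have hUU' : U * star U = 1 := by simp [hU]
  have hspec : ρ = U * D * star U := hH.spectral_theorem
  -- powers
  have hpow : ∀ ℓ : ℕ, ρ ^ ℓ = U * D ^ ℓ * star U := by
    intro ℓ
    induction ℓ with
    | zero => simp [hUU']
    | succ n ih =>
      rw [pow_succ, ih, hspec]
      calc U * D ^ n * star U * (U * D * star U)
          = U * (D ^ n * ((star U * U) * (D * star U))) := by
            simp only [Matrix.mul_assoc]
        _ = U * D ^ (n + 1) * star U := by
            rw [hUU, Matrix.one_mul, pow_succ]; simp only [Matrix.mul_assoc]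
  have hkpos : (0:ℝ) < (K:ℝ) := by exact_mod_cast hK
  have hkne : ((K:ℝ)) ≠ 0 := ne_of_gt hkpos
  have hpowval : ∀ ℓ : ℕ, (K:ℝ) ^ ((1:ℤ) - ℓ) = ((K:ℝ) ^ ℓ)⁻¹ * (K:ℝ) := by
    intro ℓ
    rw [zpow_sub₀ hkne, zpow_one, zpow_natCast, div_eq_mul_inv, mul_comm]
  have hsum : ∀ ℓ : ℕ, 1 ≤ ℓ → ∑ i, (lam i) ^ ℓ = ((K : ℝ) ^ ℓ)⁻¹ * (K:ℝ) := by
    intro ℓ hℓ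
    have h1 := htr ℓ hℓ
    rw [hpow ℓ, Matrix.trace_mul_cycle, hUU, Matrix.one_mul,
      hD, Matrix.diagonal_pow, Matrix.trace_diagonal] at h1
    have hkC : ((K:ℂ)) ≠ 0 := by exact_mod_cast hkne
    have hz : (K:ℂ) ^ ((1:ℤ) - ℓ) = ((K:ℂ) ^ ℓ)⁻¹ * (K:ℂ) := by
      rw [zpow_sub₀ hkC, zpow_one, zpow_natCast, div_eq_mul_inv, mul_comm]
    rw [hz] at h1
    have h1' : ∑ i, ((lam i : ℝ) : ℂ) ^ ℓ = ((K:ℂ) ^ ℓ)⁻¹ * (K:ℂ) := by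
      simpa [Pi.pow_apply] using h1
    have h2 : ((∑ i, lam i ^ ℓ : ℝ) : ℂ) = ((((K:ℝ) ^ ℓ)⁻¹ * (K:ℝ) : ℝ) : ℂ) := by
      push_cast
      exact h1'
    exact_mod_cast h2
  have hS1 : ∑ i, lam i = 1 := by
    have h := hsum 1 le_rfl
    simp only [pow_one] at h
    rw [h, inv_mul_cancel₀ hkne]
  have hS2 := hsum 2 one_le_two
  have hS3 := hsum 3 (by norm_num)
  have hS4 := hsum 4 (by norm_num)
  -- sum of squares is zero
  have hsq : ∑ i, ((K:ℝ) * lam i * ((K:ℝ) * lam i - 1)) ^ 2 = 0 := by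
    have expand : ∀ i, ((K:ℝ) * lam i * ((K:ℝ) * lam i - 1)) ^ 2 =
        (K:ℝ)^4 * (lam i)^4 - 2 * (K:ℝ)^3 * (lam i)^3 + (K:ℝ)^2 * (lam i)^2 := by
      intro i; ring
    rw [Finset.sum_congr rfl (fun i _ => expand i)]
    rw [Finset.sum_add_distrib, Finset.sum_sub_distrib,
      ← Finset.mul_sum, ← Finset.mul_sum, ← Finset.mul_sum, hS2, hS3, hS4]
    field_simp
    ring
  have hzero : ∀ i, (K:ℝ) * lam i * ((K:ℝ) * lam i - 1) = 0 := by
    intro i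
    have h := (Finset.sum_eq_zero_iff_of_nonneg
      (fun i _ => sq_nonneg ((K:ℝ) * lam i * ((K:ℝ) * lam i - 1)))).mp hsq i (Finset.mem_univ i)
    exact pow_eq_zero_iff (n := 2) (by norm_num) |>.mp h
  have hcases : ∀ i, lam i = 0 ∨ (K:ℝ) * lam i = 1 := by
    intro i
    rcases mul_eq_zero.mp (hzero i) with h | h
    · rcases mul_eq_zero.mp h with h' | h'
      · exact absurd h' hkne
      · exact Or.inl h'
    · exact Or.inr (by linarith)
  -- projection
  have hproj : ((K : ℂ) • ρ) * ((K : ℂ) • ρ) = (K : ℂ) • ρ := by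
    have hDD : (K:ℂ)^2 • (D * D) = (K:ℂ) • D := by
      ext i j
      rw [hD, Matrix.diagonal_mul_diagonal]
      by_cases hij : i = j
      · subst hij
        simp only [Matrix.smul_apply, Matrix.diagonal_apply_eq, Pi.mul_apply,
          Function.comp_apply, smul_eq_mul]
        rcases hcases i with h | h
        · simp [h]
        · have h' : (K:ℂ) * ((lam i : ℝ) : ℂ) = 1 := by exact_mod_cast h
          have hc : (RCLike.ofReal (lam i) : ℂ) = ((lam i : ℝ) : ℂ) := rfl
          rw [hc]
          linear_combination ((K:ℂ) * ((lam i : ℝ) : ℂ)) * h'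
      · simp [Matrix.diagonal_apply_ne _ hij]
    calc ((K : ℂ) • ρ) * ((K : ℂ) • ρ) = (K:ℂ)^2 • (ρ * ρ) := by
          rw [Matrix.smul_mul, Matrix.mul_smul, smul_smul, sq]
      _ = (K:ℂ)^2 • (U * (D * D) * star U) := by
          rw [hspec]
          congr 1
          calc U * D * star U * (U * D * star U)
              = U * (D * ((star U * U) * (D * star U))) := by
                simp only [Matrix.mul_assoc]
            _ = U * (D * D) * star U := by
                rw [hUU, Matrix.one_mul]; simp only [Matrix.mul_assoc]
      _ = U * ((K:ℂ)^2 • (D * D)) * star U := by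
          rw [Matrix.mul_smul, Matrix.smul_mul]
      _ = U * ((K:ℂ) • D) * star U := by rw [hDD]
      _ = (K : ℂ) • ρ := by rw [Matrix.mul_smul, Matrix.smul_mul, hspec]
  refine ⟨hproj, ?_, ?_⟩
  · rw [Matrix.conjTranspose_smul, hH.eq]
    congr 1
    simp [Complex.ext_iff]
  · -- rank
    have hkC : ((K:ℂ)) ≠ 0 := by exact_mod_cast hkne
    rw [rank_smul_matrix _ hkC]
    rw [hH.rank_eq_card_non_zero_eigs]
    have hcard : ((Fintype.card {i // lam i ≠ 0} : ℕ) : ℝ) = (K:ℝ) := by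
      have hind : ∀ i, (K:ℝ) * lam i = if lam i ≠ 0 then 1 else 0 := by
        intro i
        rcases hcases i with h | h
        · simp [h]
        · have hne : lam i ≠ 0 := by
            intro h0; rw [h0, mul_zero] at h; norm_num at h
          simp [hne, h]
      have h2 : ∑ i, (K:ℝ) * lam i = (K:ℝ) := by
        rw [← Finset.mul_sum, hS1, mul_one]
      rw [Finset.sum_congr rfl (fun i _ => hind i), Finset.sum_boole] at h2
      rw [Fintype.card_subtype]
      exact_mod_cast h2
    exact_mod_cast hcard
end

section
/- Let ρ be a d×d density matrix (positive semidefinite with trace 1), and let A₀, …, A_m be arbitrary d×d complex matrices. Define the (m+1)×(m+1) complex matrix Γ by Γ_{ij} = conj( tr(ρ·A_i) ) · tr(ρ·A_j) · tr( ρ · A_i · A_jᴴ ). Then Γ is Hermitian and positive semidefinite. -/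
/-!
Factor `ρ = Rᴴ R`. Cyclicity of the trace turns `tr(ρ A_i A_jᴴ)` into the Hilbert–Schmidt
inner product `tr(X_iᴴ X_j)` of `X_i = A_iᴴ Rᴴ`, so these traces form a Gram matrix, and `Γ` is
its congruence by the diagonal matrix of the expectations `tr(ρ A_i)`.
-/

open Matrix ComplexOrder

namespace Matrix

variable {ι κ n 𝕜 : Type*} [Fintype ι] [Fintype κ] [Fintype n] [RCLike 𝕜]

theorem posSemidef_trace_conjTranspose_mul (X : κ → Matrix ι n 𝕜) :
    (of fun i j ↦ ((X i)ᴴ * X j).trace).PosSemidef := by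
  let M : Matrix (ι × n) κ 𝕜 := of fun p j ↦ X j p.1 p.2
  convert posSemidef_conjTranspose_mul_self M using 1
  ext i j
  simp only [of_apply, trace, diag, mul_apply, conjTranspose_apply, Fintype.sum_prod_type, M]
  exact Finset.sum_comm

theorem PosSemidef.trace_mul_mul_conjTranspose {ρ : Matrix ι ι 𝕜} (hρ : ρ.PosSemidef)
    (B : κ → Matrix ι n 𝕜) : (of fun i j ↦ (ρ * (B i * (B j)ᴴ)).trace).PosSemidef := by
  classical
  obtain ⟨R, rfl⟩ : ∃ R : Matrix ι ι 𝕜, ρ = Rᴴ * R := by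
    open MatrixOrder in exact CStarAlgebra.nonneg_iff_eq_star_mul_self.mp hρ.nonneg
  convert posSemidef_trace_conjTranspose_mul fun i ↦ (B i)ᴴ * Rᴴ using 1
  ext i j
  simp only [of_apply, conjTranspose_mul, conjTranspose_conjTranspose]
  rw [Matrix.mul_assoc, trace_mul_comm]
  simp only [Matrix.mul_assoc]

theorem PosSemidef.star_mul_mul_apply {G : Matrix κ κ 𝕜} (hG : G.PosSemidef) (c : κ → 𝕜) :
    (of fun i j ↦ star (c i) * c j * G i j).PosSemidef := by
  classical
  convert hG.conjTranspose_mul_mul_same (diagonal c) using 1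
  ext i j
  simp [diagonal_conjTranspose, mul_comm, mul_left_comm]

end Matrix

theorem state_hankel_matrix_psd_general (d m : ℕ)
    (ρ : Matrix (Fin d) (Fin d) ℂ) (hρ : ρ.PosSemidef)
    (A : Fin (m + 1) → Matrix (Fin d) (Fin d) ℂ)
    (Γ : Matrix (Fin (m + 1)) (Fin (m + 1)) ℂ)
    (hΓ : ∀ i j, Γ i j =
      starRingEnd ℂ ((ρ * A i).trace) * (ρ * A j).trace * (ρ * (A i * (A j)ᴴ)).trace) :
    Γ.IsHermitian ∧ Γ.PosSemidef := by
  have hΓ_of : Γ = of fun i j ↦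
      star (ρ * A i).trace * (ρ * A j).trace * (ρ * (A i * (A j)ᴴ)).trace :=
    ext hΓ
  have hpsd : Γ.PosSemidef :=
    hΓ_of ▸ (hρ.trace_mul_mul_conjTranspose A).star_mul_mul_apply fun i ↦ (ρ * A i).trace
  exact ⟨hpsd.isHermitian, hpsd⟩

/-- For a density matrix `ρ` and arbitrary matrices `A₀, …, A_m`,
the state Hankel matrix `Γ_{ij} = conj(tr(ρA_i))·tr(ρA_j)·tr(ρ A_i A_jᴴ)` is
Hermitian and positive semidefinite. -/
theorem state_hankel_matrix_psd (d m : ℕ)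
    (ρ : Matrix (Fin d) (Fin d) ℂ) (hρ : ρ.PosSemidef) (htr : ρ.trace = 1)
    (A : Fin (m + 1) → Matrix (Fin d) (Fin d) ℂ)
    (Γ : Matrix (Fin (m + 1)) (Fin (m + 1)) ℂ)
    (hΓ : ∀ i j, Γ i j =
      starRingEnd ℂ ((ρ * A i).trace) * (ρ * A j).trace * (ρ * (A i * (A j)ᴴ)).trace) :
    Γ.IsHermitian ∧ Γ.PosSemidef :=
  state_hankel_matrix_psd_general d m ρ hρ A Γ hΓ
end

section
/- Let ρ be a d×d density matrix and let A₁, …, Aₙ be d×d complex matrices, each Hermitian and unitary (A_iᴴ = A_i and A_i² = 1), such that for all i ≠ j either A_i·A_j = A_j·A_i or A_i·A_j = −A_j·A_i. Then there exist a vector x ∈ ℝⁿ and a real symmetric n×n matrix X such that: the bordered (n+1)×(n+1) matrix [[1, xᵀ],[x, X]] is positive semidefinite; X_{ii} = x_i for all i; X_{ij} = 0 whenever A_i·A_j = −A_j·A_i; and Σᵢ X_{ii} = Σᵢ ( Re tr(ρ·A_i) )². In particular, Σᵢ (tr(ρ·A_i))² is at most the Lovász theta number ϑ(G) of the anticommutativity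 graph G (with i ∼ j iff A_i and A_j anticommute). -/
open Matrix ComplexOrder

/-! For `ρ ⪰ 0`, `(B, C) ↦ Re tr(ρBC)` is a symmetric positive semidefinite real bilinear form
on Hermitian matrices, so its Gram matrices are positive semidefinite. With `aᵢ = Re tr(ρAᵢ)`,
the Gram matrix of the family `1, a₁A₁, …, aₙAₙ` is the bordered matrix with `xᵢ = aᵢ²` and
`X_ij = aᵢaⱼ Re tr(ρAᵢAⱼ)`: `Aᵢ² = 1` gives `X_ii = aᵢ² = xᵢ`, and anticommutation makes
`Re tr(ρAᵢAⱼ)` its own negative. Conversely, positivity of the bordered matrix forces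
`xᵢ² ≤ X_ii = xᵢ`, so every feasible value is at most `n` and the supremum is finite. -/

variable {m ι : Type*} [Fintype m] [Fintype ι]

namespace Matrix

theorem re_trace_mul_mul_comm {ρ B C : Matrix m m ℂ} (hρ : ρ.IsHermitian) (hB : B.IsHermitian)
    (hC : C.IsHermitian) : (ρ * (B * C)).trace.re = (ρ * (C * B)).trace.re := by
  have : (ρ * (C * B)).trace = star (ρ * (B * C)).trace := by
    rw [← trace_conjTranspose, conjTranspose_mul, conjTranspose_mul, hB.eq, hC.eq, hρ.eq,
      trace_mul_cycle, Matrix.mul_assoc]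
  rw [this, Complex.star_def, Complex.conj_re]

theorem re_trace_mul_mul_eq_zero_of_anticomm {ρ B C : Matrix m m ℂ} (hρ : ρ.IsHermitian)
    (hB : B.IsHermitian) (hC : C.IsHermitian) (hBC : B * C = -(C * B)) :
    (ρ * (B * C)).trace.re = 0 := by
  have := re_trace_mul_mul_comm hρ hB hC
  rw [hBC, Matrix.mul_neg, trace_neg, Complex.neg_re] at this ⊢
  linarith

theorem PosSemidef.re_trace_mul_mul_self_nonneg {ρ B : Matrix m m ℂ} (hρ : ρ.PosSemidef)
    (hB : B.IsHermitian) : 0 ≤ (ρ * (B * B)).trace.re := by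
  have h := (hρ.mul_mul_conjTranspose_same B).trace_nonneg
  rw [hB.eq, trace_mul_cycle, trace_mul_comm] at h
  exact Complex.nonneg_iff.mp h |>.1

theorem PosSemidef.posSemidef_re_trace_mul_mul {ρ : Matrix m m ℂ}
    (hρ : ρ.PosSemidef) {B : ι → Matrix m m ℂ} (hB : ∀ i, (B i).IsHermitian) :
    (of fun i j => (ρ * (B i * B j)).trace.re).PosSemidef := by
  refine .of_dotProduct_mulVec_nonneg ?_ fun v => ?_
  · ext i j
    exact re_trace_mul_mul_comm hρ.isHermitian (hB j) (hB i)
  · have hC : (∑ i, v i • B i).IsHermitian :=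
      (isSelfAdjoint_sum _ fun i _ => ((hB i).smul (.all (v i))).isSelfAdjoint).isHermitian
    refine (hρ.re_trace_mul_mul_self_nonneg hC).trans_eq ?_
    rw [Finset.sum_mul_sum]
    simp only [Finset.mul_sum, smul_mul_smul_comm, Matrix.mul_smul, trace_sum,
      trace_smul, Complex.re_sum, Complex.smul_re, dotProduct, mulVec, of_apply, star_trivial]
    exact Finset.sum_congr rfl fun i _ => Finset.sum_congr rfl fun j _ => by ring

theorem sq_le_of_posSemidef_fromBlocks_one {x : ι → ℝ} {X : Matrix ι ι ℝ}
    (h : (fromBlocks (1 : Matrix (Fin 1) (Fin 1) ℝ) (of fun _ j => x j) (of fun i _ => x i)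
      X).PosSemidef) (i : ι) : x i ^ 2 ≤ X i i := by
  have hcol : (of fun i (_ : Fin 1) => x i) = (of fun (_ : Fin 1) j => x j)ᴴ := by
    ext; simp
  let : Invertible (1 : Matrix (Fin 1) (Fin 1) ℝ) := invertibleOne
  rw [hcol, PosDef.fromBlocks₁₁ _ _ PosDef.one] at h
  simpa [sq, mul_apply] using h.diag_nonneg (i := i)

end Matrix

def IsLovaszThetaFeasible (adj : ι → ι → Prop) (x : ι → ℝ) (X : Matrix ι ι ℝ) : Prop :=
  X.IsSymm ∧
    (fromBlocks (1 : Matrix (Fin 1) (Fin 1) ℝ) (of fun _ j => x j) (of fun i _ => x i)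
      X).PosSemidef ∧
    (∀ i, X i i = x i) ∧ ∀ i j, adj i j → X i j = 0

theorem IsLovaszThetaFeasible.sum_diag_le_card {adj : ι → ι → Prop} {x : ι → ℝ}
    {X : Matrix ι ι ℝ} (h : IsLovaszThetaFeasible adj x X) : ∑ i, X i i ≤ Fintype.card ι := by
  obtain ⟨-, hpsd, hdiag, -⟩ := h
  have hle : ∀ i, X i i ≤ 1 := fun i => by
    have := sq_le_of_posSemidef_fromBlocks_one hpsd i
    rw [← hdiag] at this
    nlinarith
  simpa using Finset.sum_le_sum fun i (_ : i ∈ Finset.univ) => hle i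

theorem exists_isLovaszThetaFeasible_sum_diag_eq [DecidableEq m] {ρ : Matrix m m ℂ}
    (hρ : ρ.PosSemidef) (htr : ρ.trace = 1) {A : ι → Matrix m m ℂ}
    (hherm : ∀ i, (A i).IsHermitian) (hunit : ∀ i, A i * A i = 1) :
    ∃ x X, IsLovaszThetaFeasible (fun i j => A i * A j = -(A j * A i)) x X ∧
      ∑ i, X i i = ∑ i, (ρ * A i).trace.re ^ 2 := by
  set a : ι → ℝ := fun i => (ρ * A i).trace.re
  set B : Fin 1 ⊕ ι → Matrix m m ℂ := Sum.elim 1 fun i => a i • A i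
  have hB : ∀ p, (B p).IsHermitian := by
    rintro (_ | i)
    exacts [isHermitian_one, (hherm i).smul (.all _)]
  set X : Matrix ι ι ℝ := of fun i j => (ρ * (B (.inr i) * B (.inr j))).trace.re
  have hX : ∀ i j, X i j = a i * a j * (ρ * (A i * A j)).trace.re := fun i j => by
    simp only [X, B, of_apply, Sum.elim_inr, smul_mul_smul_comm, Matrix.mul_smul, trace_smul,
      Complex.smul_re, smul_eq_mul]
  have hdiag : ∀ i, X i i = a i ^ 2 := fun i => by
    simp [hX, hunit, htr, sq]
  refine ⟨fun i => a i ^ 2, X, ⟨?_, ?_, hdiag, fun i j hij => ?_⟩,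
    Finset.sum_congr rfl fun i _ => hdiag i⟩
  · ext i j
    exact re_trace_mul_mul_comm hρ.isHermitian (hB _) (hB _)
  · convert hρ.posSemidef_re_trace_mul_mul hB using 1
    ext (p | i) (q | j)
    · simp [B, Subsingleton.elim p q, htr]
    · simp [B, a, trace_smul, sq]
    · simp [B, a, trace_smul, sq]
    · rfl
  · rw [hX, re_trace_mul_mul_eq_zero_of_anticomm hρ.isHermitian (hherm i) (hherm j) hij, mul_zero]

theorem squared_expectations_feasible_for_lovasz_theta_general (d n : ℕ)
    (ρ : Matrix (Fin d) (Fin d) ℂ) (hρ : ρ.PosSemidef) (htr : ρ.trace = 1)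
    (A : Fin n → Matrix (Fin d) (Fin d) ℂ)
    (hherm : ∀ i, (A i)ᴴ = A i) (hunit : ∀ i, A i * A i = 1) :
    (∃ (x : Fin n → ℝ) (X : Matrix (Fin n) (Fin n) ℝ),
      X.IsSymm ∧
      (Matrix.fromBlocks (1 : Matrix (Fin 1) (Fin 1) ℝ)
        (Matrix.of fun (_ : Fin 1) j => x j)
        (Matrix.of fun i (_ : Fin 1) => x i) X).PosSemidef ∧
      (∀ i, X i i = x i) ∧
      (∀ i j, A i * A j = -(A j * A i) → X i j = 0) ∧
      ∑ i, X i i = ∑ i, ((ρ * A i).trace.re) ^ 2) ∧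
    ∑ i, ((ρ * A i).trace.re) ^ 2 ≤
      sSup {t : ℝ | ∃ (x : Fin n → ℝ) (X : Matrix (Fin n) (Fin n) ℝ),
        X.IsSymm ∧
        (Matrix.fromBlocks (1 : Matrix (Fin 1) (Fin 1) ℝ)
          (Matrix.of fun (_ : Fin 1) j => x j)
          (Matrix.of fun i (_ : Fin 1) => x i) X).PosSemidef ∧
        (∀ i, X i i = x i) ∧
        (∀ i j, A i * A j = -(A j * A i) → X i j = 0) ∧
        t = ∑ i, X i i} := by
  obtain ⟨x, X, ⟨hsymm, hpsd, hdiag, hadj⟩, hsum⟩ :=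
    exists_isLovaszThetaFeasible_sum_diag_eq hρ htr hherm hunit
  refine ⟨⟨x, X, hsymm, hpsd, hdiag, hadj, hsum⟩,
    le_csSup ⟨n, ?_⟩ ⟨x, X, hsymm, hpsd, hdiag, hadj, hsum.symm⟩⟩
  rintro _ ⟨y, Y, hY₁, hY₂, hY₃, hY₄, rfl⟩
  simpa using IsLovaszThetaFeasible.sum_diag_le_card ⟨hY₁, hY₂, hY₃, hY₄⟩

/-- For a density matrix `ρ` and Hermitian unitary observables
`A₁, …, Aₙ` that pairwise commute or anticommute, the vector of squared expectations
is realized by a feasible point of the Lovász theta SDP of the anticommutativity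
graph; in particular `Σᵢ (Re tr(ρAᵢ))² ≤ ϑ(G)`. -/
theorem squared_expectations_feasible_for_lovasz_theta (d n : ℕ)
    (ρ : Matrix (Fin d) (Fin d) ℂ) (hρ : ρ.PosSemidef) (htr : ρ.trace = 1)
    (A : Fin n → Matrix (Fin d) (Fin d) ℂ)
    (hherm : ∀ i, (A i)ᴴ = A i) (hunit : ∀ i, A i * A i = 1)
    (hcomm : ∀ i j, i ≠ j → A i * A j = A j * A i ∨ A i * A j = -(A j * A i)) :
    (∃ (x : Fin n → ℝ) (X : Matrix (Fin n) (Fin n) ℝ),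
      X.IsSymm ∧
      (Matrix.fromBlocks (1 : Matrix (Fin 1) (Fin 1) ℝ)
        (Matrix.of fun (_ : Fin 1) j => x j)
        (Matrix.of fun i (_ : Fin 1) => x i) X).PosSemidef ∧
      (∀ i, X i i = x i) ∧
      (∀ i j, A i * A j = -(A j * A i) → X i j = 0) ∧
      ∑ i, X i i = ∑ i, ((ρ * A i).trace.re) ^ 2) ∧
    ∑ i, ((ρ * A i).trace.re) ^ 2 ≤
      sSup {t : ℝ | ∃ (x : Fin n → ℝ) (X : Matrix (Fin n) (Fin n) ℝ),
        X.IsSymm ∧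
        (Matrix.fromBlocks (1 : Matrix (Fin 1) (Fin 1) ℝ)
          (Matrix.of fun (_ : Fin 1) j => x j)
          (Matrix.of fun i (_ : Fin 1) => x i) X).PosSemidef ∧
        (∀ i, X i i = x i) ∧
        (∀ i j, A i * A j = -(A j * A i) → X i j = 0) ∧
        t = ∑ i, X i i} :=
  squared_expectations_feasible_for_lovasz_theta_general d n ρ hρ htr A hherm hunit
end

section
/- Let ρ be a d×d density matrix and let A₁, A₂, A₃ be d×d complex matrices, each Hermitian and unitary (A_iᴴ = A_i and A_i² = 1), that pairwise anticommute: A_i·A_j = −A_j·A_i for all i ≠ j. Then ( Re tr(ρ·A₁) )² + ( Re tr(ρ·A₂) )² + ( Re tr(ρ·A₃) )² ≤ 1. -/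
open Matrix ComplexOrder

lemma psd_trace_re_nonneg {d : ℕ} {P : Matrix (Fin d) (Fin d) ℂ} (hP : P.PosSemidef) :
    0 ≤ P.trace.re := by
  rw [Matrix.trace, Complex.re_sum]
  refine Finset.sum_nonneg fun i _ => ?_
  have := hP.re_dotProduct_nonneg (Pi.single i 1)
  simpa [Matrix.mulVec_single, dotProduct, Pi.single_apply, Matrix.diag] using this

/-- For three pairwise anticommuting Hermitian unitaries
`A₁, A₂, A₃` and any density matrix `ρ`, the sum of squared expectation values is
at most `1` (the triangle case `β(C₃) = 1`). -/
theorem triangle_uncertainty (d : ℕ)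
    (ρ : Matrix (Fin d) (Fin d) ℂ) (hρ : ρ.PosSemidef) (htr : ρ.trace = 1)
    (A : Fin 3 → Matrix (Fin d) (Fin d) ℂ)
    (hherm : ∀ i, (A i)ᴴ = A i) (hunit : ∀ i, A i * A i = 1)
    (hanti : ∀ i j, i ≠ j → A i * A j = -(A j * A i)) :
    ∑ i, ((ρ * A i).trace.re) ^ 2 ≤ 1 := by
  set t : Fin 3 → ℝ := fun i => ((ρ * A i).trace).re with ht
  set c : ℝ := ∑ i, t i ^ 2 with hc
  -- each expectation is real
  have hreal : ∀ i, (ρ * A i).trace = ((t i : ℝ) : ℂ) := by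
    intro i
    have hstar : (starRingEnd ℂ) ((ρ * A i).trace) = (ρ * A i).trace := by
      calc (starRingEnd ℂ) ((ρ * A i).trace) = ((ρ * A i)ᴴ).trace := by
            rw [Matrix.trace_conjTranspose]; rfl
        _ = (A i * ρ).trace := by rw [Matrix.conjTranspose_mul, hherm, hρ.1.eq]
        _ = (ρ * A i).trace := Matrix.trace_mul_comm _ _
    exact (Complex.conj_eq_iff_re.mp hstar).symm
  set B : Matrix (Fin d) (Fin d) ℂ := ∑ i, ((t i : ℝ) : ℂ) • A i with hB
  have h01 := hanti 0 1 (by decide)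
  have h02 := hanti 0 2 (by decide)
  have h12 := hanti 1 2 (by decide)
  have hB2 : B * B = ((c : ℝ) : ℂ) • 1 := by
    rw [hB, hc]
    simp only [Fin.sum_univ_three]
    push_cast
    simp only [add_mul, mul_add, smul_mul_assoc, mul_smul_comm, hunit, h01, h02, h12]
    module
  have htrB : (ρ * B).trace = ((c : ℝ) : ℂ) := by
    rw [hB, Finset.mul_sum]
    simp only [mul_smul_comm, Matrix.trace_sum, Matrix.trace_smul, hreal, hc]
    push_cast
    simp [smul_eq_mul, sq]
  set M : Matrix (Fin d) (Fin d) ℂ := ((c : ℝ) : ℂ) • 1 - B with hM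
  have hMH : Mᴴ = M := by
    rw [hM, Matrix.conjTranspose_sub, Matrix.conjTranspose_smul, Matrix.conjTranspose_one, hB]
    simp [Matrix.conjTranspose_sum, Matrix.conjTranspose_smul, hherm, Complex.star_def,
      Complex.conj_ofReal]
  have hpsd : (M * ρ * Mᴴ).PosSemidef := hρ.mul_mul_conjTranspose_same M
  have htrace_eq : (M * ρ * Mᴴ).trace = (ρ * (Mᴴ * M)).trace := by
    rw [Matrix.trace_mul_cycle, Matrix.trace_mul_comm]
  have hMM : Mᴴ * M = ((c ^ 2 + c : ℝ) : ℂ) • 1 - ((2 * c : ℝ) : ℂ) • B := by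
    rw [hMH, hM]
    rw [sub_mul, mul_sub, mul_sub, smul_mul_assoc, smul_mul_assoc, mul_smul_comm,
      hB2]
    simp only [one_mul, mul_one, mul_smul_comm, smul_smul]
    push_cast
    module
  have hval : (ρ * (Mᴴ * M)).trace = ((c - c ^ 2 : ℝ) : ℂ) := by
    rw [hMM, mul_sub, Matrix.trace_sub, mul_smul_comm, mul_smul_comm, Matrix.trace_smul,
      Matrix.trace_smul, mul_one, htr, htrB]
    simp only [smul_eq_mul, mul_one]
    push_cast
    ring
  have h0 : (0 : ℝ) ≤ c - c ^ 2 := by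
    have := psd_trace_re_nonneg hpsd
    rw [htrace_eq, hval] at this
    simp only [Complex.ofReal_re] at this
    exact this
  have hc0 : 0 ≤ c := Finset.sum_nonneg fun i _ => sq_nonneg _
  show c ≤ 1
  nlinarith
end
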